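/- (Khinchin inequality, L^1, with constant) For any real numbers y_1,...,y_n, if ε_1,...,ε_n are independent uniform random signs, then (Σ_i y_i^2)^{1/2} ≥ E|Σ_i ε_i y_i| ≥ (1/√2)·(Σ_i y_i^2)^{1/2}. -/

import Mathlib

/-!
Write `f ε = |∑ ε_i y_i|`, so that `𝔼 f² = ∑ y_i²`; the upper bound is Cauchy–Schwarz.
For the lower bound expand `f` in the Walsh basis `w_A ε = ∏_{i ∈ A} ε_i`. Since `f` is even,
`f̂(A) = 0` whenever `|A|` is odd, hence
`Var f = ∑_{A ≠ ∅} f̂(A)² ≤ ½ ∑_A |A| f̂(A)² = ½ ∑_i 𝔼 ((f - f ∘ flip_i) / 2)²`.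
Flipping `ε_i` moves `f` by at most `2 |y_i|`, so `Var f ≤ ½ ∑ y_i²`, i.e. `(𝔼 f)² ≥ ½ ∑ y_i²`.
-/

open Finset

namespace BooleanCube

variable {ι : Type*}

def spin (b : Bool) : ℝ := if b then 1 else -1

@[simp] lemma spin_true : spin true = 1 := rfl

@[simp] lemma spin_false : spin false = -1 := rfl

lemma spin_not (b : Bool) : spin (!b) = -spin b := by cases b <;> simp

lemma spin_sq (b : Bool) : spin b ^ 2 = 1 := by cases b <;> simp

lemma sum_eq_zero_of_comp_perm_eq_neg {α : Type*} [Fintype α] (σ : Equiv.Perm α) {g : α → ℝ}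
    (h : ∀ x, g (σ x) = -g x) : ∑ x, g x = 0 := by
  have := Equiv.sum_comp σ g
  simp only [h, sum_neg_distrib] at this
  linarith

theorem sum_sq_sum_mul {α κ R : Type*} [CommSemiring R] (s : Finset α) (t : Finset κ) (a : κ → R)
    (g : κ → α → R) :
    ∑ x ∈ s, (∑ k ∈ t, a k * g k x) ^ 2 = ∑ k ∈ t, ∑ l ∈ t, a k * a l * ∑ x ∈ s, g k x * g l x := by
  simp_rw [sq, sum_mul_sum, mul_sum]
  rw [sum_comm]
  refine sum_congr rfl fun k _ => ?_
  rw [sum_comm]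
  exact sum_congr rfl fun l _ => sum_congr rfl fun x _ => by ring

def flipAll (ε : ι → Bool) : ι → Bool := fun i => !ε i

lemma flipAll_involutive : Function.Involutive (flipAll (ι := ι)) := by
  intro ε
  funext i
  simp [flipAll]

def walsh (A : Finset ι) (ε : ι → Bool) : ℝ := ∏ i ∈ A, spin (ε i)

lemma walsh_flipAll (A : Finset ι) (ε : ι → Bool) :
    walsh A (flipAll ε) = (-1) ^ #A * walsh A ε := by
  simp [walsh, flipAll, spin_not, prod_neg]

section flipAt

variable [DecidableEq ι]

def flipAt (i : ι) (ε : ι → Bool) : ι → Bool := Function.update ε i (!ε i)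

lemma flipAt_involutive (i : ι) : Function.Involutive (flipAt i) := by
  intro ε
  simp [flipAt]

lemma walsh_flipAt (A : Finset ι) (i : ι) (ε : ι → Bool) :
    walsh A (flipAt i ε) = (if i ∈ A then -1 else 1) * walsh A ε := by
  have hoff : ∀ j ∈ A.erase i, spin (flipAt i ε j) = spin (ε j) := fun j hj => by
    rw [flipAt, Function.update_of_ne (ne_of_mem_erase hj)]
  split_ifs with hi
  · rw [walsh, walsh, ← mul_prod_erase A _ hi, ← mul_prod_erase A _ hi, prod_congr rfl hoff]
    simp [flipAt, spin_not]
  · rw [one_mul, walsh, walsh, ← erase_eq_of_notMem hi, prod_congr rfl hoff]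

end flipAt

section Fourier

variable [Fintype ι]

lemma sum_walsh_mul_walsh (ε ε' : ι → Bool) :
    ∑ A, walsh A ε * walsh A ε' = if ε = ε' then 2 ^ Fintype.card ι else 0 := by
  calc ∑ A, walsh A ε * walsh A ε' = ∏ i, (1 + spin (ε i) * spin (ε' i)) := by
        simp [prod_one_add, walsh, prod_mul_distrib]
    _ = ∏ i, if ε i = ε' i then 2 else 0 := by
        congr! 1 with i
        cases ε i <;> cases ε' i <;> norm_num
    _ = if ε = ε' then 2 ^ Fintype.card ι else 0 := by
        simp [prod_ite_zero, funext_iff]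

variable [DecidableEq ι]

lemma card_cube : (Fintype.card (ι → Bool) : ℝ) = 2 ^ Fintype.card ι := by
  simp

/-- Unnormalised: the Walsh coefficient is `2 ^ card ι` times the usual one. -/
def fourierCoeff (f : (ι → Bool) → ℝ) (A : Finset ι) : ℝ := ∑ ε, f ε * walsh A ε

lemma fourierCoeff_empty (f : (ι → Bool) → ℝ) : fourierCoeff f ∅ = ∑ ε, f ε := by
  simp [fourierCoeff, walsh]

theorem sum_sq_fourierCoeff (f : (ι → Bool) → ℝ) :
    ∑ A, fourierCoeff f A ^ 2 = 2 ^ Fintype.card ι * ∑ ε, f ε ^ 2 := by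
  calc ∑ A, fourierCoeff f A ^ 2
        = ∑ ε, ∑ ε', f ε * f ε' * ∑ A, walsh A ε * walsh A ε' :=
        sum_sq_sum_mul _ _ _ fun ε A => walsh A ε
    _ = 2 ^ Fintype.card ι * ∑ ε, f ε ^ 2 := by
        simp [sum_walsh_mul_walsh, mul_sum, sq, mul_comm]

lemma fourierCoeff_sub (f g : (ι → Bool) → ℝ) (A : Finset ι) :
    fourierCoeff (fun ε => f ε - g ε) A = fourierCoeff f A - fourierCoeff g A := by
  simp [fourierCoeff, sub_mul]

lemma fourierCoeff_comp_flipAt (f : (ι → Bool) → ℝ) (i : ι) (A : Finset ι) :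
    fourierCoeff (fun ε => f (flipAt i ε)) A = (if i ∈ A then -1 else 1) * fourierCoeff f A := by
  rw [fourierCoeff, ← Equiv.sum_comp ((flipAt_involutive i).toPerm _)]
  simp [flipAt_involutive i _, walsh_flipAt, fourierCoeff, mul_sum, mul_left_comm]

lemma fourierCoeff_sub_comp_flipAt (f : (ι → Bool) → ℝ) (i : ι) (A : Finset ι) :
    fourierCoeff (fun ε => f ε - f (flipAt i ε)) A
      = if i ∈ A then 2 * fourierCoeff f A else 0 := by
  rw [fourierCoeff_sub, fourierCoeff_comp_flipAt]
  split_ifs <;> ring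

theorem four_mul_sum_card_mul_sq_fourierCoeff (f : (ι → Bool) → ℝ) :
    4 * ∑ A, #A * fourierCoeff f A ^ 2
      = 2 ^ Fintype.card ι * ∑ i, ∑ ε, (f ε - f (flipAt i ε)) ^ 2 := by
  have hcoord : ∀ i, 4 * ∑ A, (if i ∈ A then fourierCoeff f A ^ 2 else 0)
      = 2 ^ Fintype.card ι * ∑ ε, (f ε - f (flipAt i ε)) ^ 2 := fun i => by
    rw [← sum_sq_fourierCoeff, mul_sum]
    refine sum_congr rfl fun A _ => ?_
    rw [fourierCoeff_sub_comp_flipAt]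
    split_ifs <;> ring
  have hcard : ∀ A : Finset ι, ∑ i, (if i ∈ A then fourierCoeff f A ^ 2 else 0)
      = #A * fourierCoeff f A ^ 2 := fun A => by
    rw [sum_ite_mem, univ_inter, sum_const, nsmul_eq_mul]
  calc 4 * ∑ A, #A * fourierCoeff f A ^ 2
        = ∑ i, 4 * ∑ A, (if i ∈ A then fourierCoeff f A ^ 2 else 0) := by
        simp only [← hcard, ← mul_sum]
        rw [sum_comm]
    _ = _ := by
        rw [mul_sum]
        exact sum_congr rfl fun i _ => hcoord i

lemma fourierCoeff_eq_zero_of_odd {f : (ι → Bool) → ℝ} (hf : ∀ ε, f (flipAll ε) = f ε)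
    {A : Finset ι} (hA : Odd #A) : fourierCoeff f A = 0 :=
  sum_eq_zero_of_comp_perm_eq_neg (flipAll_involutive.toPerm _) fun ε => by
    simp [hf, walsh_flipAll, hA.neg_one_pow]

lemma two_mul_sq_fourierCoeff_le_of_even {f : (ι → Bool) → ℝ} (hf : ∀ ε, f (flipAll ε) = f ε)
    {A : Finset ι} (hA : A ≠ ∅) : 2 * fourierCoeff f A ^ 2 ≤ #A * fourierCoeff f A ^ 2 := by
  rcases Nat.even_or_odd #A with heven | hodd
  · have hne : #A ≠ 0 := card_ne_zero.mpr (nonempty_iff_ne_empty.mpr hA)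
    have htwo : 2 ≤ #A := by
      obtain ⟨k, hk⟩ := heven
      omega
    exact mul_le_mul_of_nonneg_right (by exact_mod_cast htwo) (sq_nonneg _)
  · simp [fourierCoeff_eq_zero_of_odd hf hodd]

/-- Twice as strong as the Poincaré inequality for general functions, because an even function
has no Walsh coefficients on level one. -/
theorem poincare_of_even {f : (ι → Bool) → ℝ} (hf : ∀ ε, f (flipAll ε) = f ε) :
    8 * (2 ^ Fintype.card ι * ∑ ε, f ε ^ 2 - (∑ ε, f ε) ^ 2)
      ≤ 2 ^ Fintype.card ι * ∑ i, ∑ ε, (f ε - f (flipAt i ε)) ^ 2 := by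
  have hvar : 2 ^ Fintype.card ι * ∑ ε, f ε ^ 2 - (∑ ε, f ε) ^ 2
      = ∑ A ∈ univ.erase ∅, fourierCoeff f A ^ 2 := by
    rw [← sum_sq_fourierCoeff, ← fourierCoeff_empty, ← add_sum_erase _ _ (mem_univ ∅)]
    ring
  have hlevels : ∑ A ∈ univ.erase ∅, 2 * fourierCoeff f A ^ 2 ≤ ∑ A, #A * fourierCoeff f A ^ 2 :=
    calc _ ≤ ∑ A ∈ univ.erase ∅, #A * fourierCoeff f A ^ 2 :=
          sum_le_sum fun A hA => two_mul_sq_fourierCoeff_le_of_even hf (ne_of_mem_erase hA)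
      _ ≤ _ := sum_le_sum_of_subset_of_nonneg (erase_subset _ _) fun _ _ _ => by positivity
  rw [← mul_sum] at hlevels
  rw [← four_mul_sum_card_mul_sq_fourierCoeff, hvar]
  linarith

end Fourier

section Khinchin

variable [Fintype ι] (y : ι → ℝ)

def signedSum (ε : ι → Bool) : ℝ := ∑ i, spin (ε i) * y i

lemma signedSum_flipAll (ε : ι → Bool) : signedSum y (flipAll ε) = -signedSum y ε := by
  simp [signedSum, flipAll, spin_not]

variable [DecidableEq ι]

lemma signedSum_sub_signedSum_flipAt (i : ι) (ε : ι → Bool) :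
    signedSum y ε - signedSum y (flipAt i ε) = 2 * spin (ε i) * y i := by
  rw [signedSum, signedSum, ← sum_sub_distrib, sum_eq_single i]
  · simp [flipAt, spin_not]
    ring
  · intro j _ hj
    simp [flipAt, Function.update_of_ne hj]
  · simp

lemma sum_spin_mul_spin (i j : ι) :
    ∑ ε : ι → Bool, spin (ε i) * spin (ε j) = if i = j then 2 ^ Fintype.card ι else 0 := by
  split_ifs with h
  · simp [h, ← sq, spin_sq]
  · refine sum_eq_zero_of_comp_perm_eq_neg ((flipAt_involutive i).toPerm _) fun ε => ?_
    simp [flipAt, Function.update_of_ne (Ne.symm h), spin_not]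

lemma sum_sq_signedSum : ∑ ε, signedSum y ε ^ 2 = 2 ^ Fintype.card ι * ∑ i, y i ^ 2 := by
  calc ∑ ε, signedSum y ε ^ 2 = ∑ i, ∑ j, y i * y j * ∑ ε : ι → Bool, spin (ε i) * spin (ε j) := by
        simp only [signedSum, mul_comm (spin _) (y _)]
        exact sum_sq_sum_mul (univ : Finset (ι → Bool)) univ y fun i ε => spin (ε i)
    _ = 2 ^ Fintype.card ι * ∑ i, y i ^ 2 := by
        simp only [sum_spin_mul_spin, mul_ite, mul_zero, sum_ite_eq, mem_univ, if_true, mul_sum]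
        exact sum_congr rfl fun i _ => by ring

theorem sq_sum_abs_signedSum_le :
    (∑ ε, |signedSum y ε|) ^ 2 ≤ (2 ^ Fintype.card ι) ^ 2 * ∑ i, y i ^ 2 := by
  have := sq_sum_le_card_mul_sum_sq (s := univ) (f := fun ε => |signedSum y ε|)
  simp only [sq_abs, sum_sq_signedSum, card_univ, card_cube] at this
  linarith

theorem sum_sq_le_two_mul_sq_sum_abs_signedSum :
    (2 ^ Fintype.card ι) ^ 2 * ∑ i, y i ^ 2 ≤ 2 * (∑ ε, |signedSum y ε|) ^ 2 := by
  have hpoincare := poincare_of_even (f := fun ε => |signedSum y ε|)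
    fun ε => by simp [signedSum_flipAll]
  have hflip : ∀ i ε, (|signedSum y ε| - |signedSum y (flipAt i ε)|) ^ 2 ≤ 4 * y i ^ 2 :=
    fun i ε => calc
      _ ≤ (signedSum y ε - signedSum y (flipAt i ε)) ^ 2 :=
          sq_le_sq.mpr (abs_abs_sub_abs_le_abs_sub _ _)
      _ = 4 * y i ^ 2 := by
          rw [signedSum_sub_signedSum_flipAt, mul_pow, mul_pow, spin_sq]
          ring
  have hinfluence : ∑ i, ∑ ε, (|signedSum y ε| - |signedSum y (flipAt i ε)|) ^ 2
      ≤ 2 ^ Fintype.card ι * (4 * ∑ i, y i ^ 2) := by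
    calc _ ≤ ∑ i, ∑ _ε : ι → Bool, 4 * y i ^ 2 :=
          sum_le_sum fun i _ => sum_le_sum fun ε _ => hflip i ε
      _ = _ := by simp [mul_sum]
  simp only [sq_abs, sum_sq_signedSum] at hpoincare
  nlinarith [mul_le_mul_of_nonneg_left hinfluence (by positivity : (0 : ℝ) ≤ 2 ^ Fintype.card ι)]

end Khinchin

end BooleanCube

/-- Khinchin inequality in L¹ with Szarek's constant `1/√2`:
`√(∑ y_i²) ≥ E|∑ ε_i y_i| ≥ (1/√2) √(∑ y_i²)`. -/
theorem khinchin_L1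
    (n : ℕ) (y : Fin n → ℝ) :
    (∑ ε : Fin n → Bool, |∑ i, (if ε i then (1:ℝ) else -1) * y i|) / 2 ^ n
        ≤ Real.sqrt (∑ i, y i ^ 2) ∧
    (1 / Real.sqrt 2) * Real.sqrt (∑ i, y i ^ 2)
        ≤ (∑ ε : Fin n → Bool, |∑ i, (if ε i then (1:ℝ) else -1) * y i|) / 2 ^ n := by
  change (∑ ε, |BooleanCube.signedSum y ε|) / 2 ^ n ≤ _ ∧
    _ ≤ (∑ ε, |BooleanCube.signedSum y ε|) / 2 ^ n
  have hupper := BooleanCube.sq_sum_abs_signedSum_le y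
  have hlower := BooleanCube.sum_sq_le_two_mul_sq_sum_abs_signedSum y
  rw [Fintype.card_fin] at hupper hlower
  have hY : 0 ≤ ∑ i, y i ^ 2 := by positivity
  constructor
  · rw [Real.le_sqrt (by positivity) hY, div_pow, div_le_iff₀ (by positivity)]
    linarith
  · calc 1 / Real.sqrt 2 * Real.sqrt (∑ i, y i ^ 2) = Real.sqrt ((∑ i, y i ^ 2) / 2) := by
          rw [Real.sqrt_div hY]
          ring
      _ ≤ _ := by
          rw [Real.sqrt_le_left (by positivity), div_pow, le_div_iff₀ (by positivity)]
          linarith
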